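/- Every dual automorphism-invariant abelian group is reduced: if G is an abelian group that is dual automorphism-invariant as a ℤ-module, then G has no nonzero divisible subgroup. -/

import Mathlib

open LinearMap Submodule

/-- A submodule N of M is small (superfluous) in M:
N + K = M implies K = M for every submodule K. -/
def IsSmall {R : Type*} [Ring R] {M : Type*} [AddCommGroup M] [Module R M]
    (N : Submodule R M) : Prop :=
  ∀ K : Submodule R M, N ⊔ K = ⊤ → K = ⊤

/-- M is a dual automorphism-invariant R-module: for any two small submodules
K₁, K₂ of M, every surjective homomorphism η : M/K₁ → M/K₂ whose kernel is
small in M/K₁ lifts to an endomorphism φ of M (i.e. π₂ ∘ φ = η ∘ π₁). -/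
def IsDualAutoInv (R M : Type*) [Ring R] [AddCommGroup M] [Module R M] : Prop :=
  ∀ (K₁ K₂ : Submodule R M), IsSmall K₁ → IsSmall K₂ →
    ∀ η : (M ⧸ K₁) →ₗ[R] (M ⧸ K₂), Function.Surjective η →
      IsSmall (LinearMap.ker η) →
      ∃ φ : M →ₗ[R] M, K₂.mkQ ∘ₗ φ = η ∘ₗ K₁.mkQ

/-! A divisible subgroup `D` of `G` is a direct summand (it is injective). If some `0 ≠ d ∈ D` has
finite order `n`, multiplication by `n` on `D`, extended by the identity on a complement,
identifies `G` with `G ⧸ D[n]`, where the `n`-torsion `D[n]` of `D` is small because it is bounded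
inside a divisible group; lifting the inverse isomorphism forces `D[n] = 0`. If instead `d` has
infinite order, `span {d}` is small and `G ⧸ span {d}` has an involution acting as `-1` on the
`2`-primary part of the image of `D`. A lift `φ` of it satisfies `φ d ≡ d` modulo `3 d` (compute
through `d / 3`) and `φ d ≡ -d` modulo `2 ^ k d` for every `k` (compute through `d / 2 ^ k`),
which is impossible. -/

section

variable {R M : Type*} [Ring R] [AddCommGroup M] [Module R M]

theorem isSmall_bot : IsSmall (⊥ : Submodule R M) := fun K hK => by simpa using hK

theorem IsDualAutoInv.eq_bot_of_linearEquiv_quotient (h : IsDualAutoInv R M)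
    {K : Submodule R M} (hK : IsSmall K) (e : M ≃ₗ[R] M ⧸ K) : K = ⊥ := by
  let η : (M ⧸ (⊥ : Submodule R M)) ≃ₗ[R] M ⧸ K := (quotEquivOfEqBot ⊥ rfl).trans e
  obtain ⟨φ, hφ⟩ := h ⊥ K isSmall_bot hK η η.surjective (by rw [η.ker]; exact isSmall_bot)
  have hφe : ∀ x, K.mkQ (φ x) = e x := LinearMap.congr_fun hφ
  have hφ_surj : range φ = ⊤ := by
    refine hK _ ((map_mkQ_eq_top K _).mp ?_)
    rw [← range_comp, range_eq_top]
    intro t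
    obtain ⟨x, rfl⟩ := e.surjective t
    exact ⟨x, hφe x⟩
  refine eq_bot_iff.mpr fun k hk => ?_
  obtain ⟨x, rfl⟩ : k ∈ range φ := hφ_surj ▸ mem_top
  have hx : e x = 0 := by rw [← hφe]; exact (Quotient.mk_eq_zero K).mpr hk
  rw [e.map_eq_zero_iff.mp hx, map_zero]
  exact zero_mem _

end

namespace Submodule

variable {G G' : Type*} [AddCommGroup G] [AddCommGroup G']

def IsDivisible (D : Submodule ℤ G) : Prop :=
  ∀ n : ℕ, 0 < n → ∀ d ∈ D, ∃ x ∈ D, (n : ℤ) • x = d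

theorem eq_zero_of_isCoprime_of_smul_eq_zero {a b : ℤ} (hab : IsCoprime a b) {x : G}
    (ha : a • x = 0) (hb : b • x = 0) : x = 0 := by
  obtain ⟨u, v, huv⟩ := hab
  calc x = (u * a + v * b) • x := by rw [huv, one_smul]
    _ = 0 := by rw [add_smul, mul_smul, mul_smul, ha, hb, smul_zero, smul_zero, add_zero]

theorem mem_torsion'_powers_iff {p : ℤ} {x : G} :
    x ∈ torsion' ℤ G (Submonoid.powers p) ↔ ∃ k : ℕ, p ^ k • x = 0 :=
  ⟨fun ⟨⟨_, k, rfl⟩, h⟩ => ⟨k, h⟩, fun ⟨k, h⟩ => ⟨⟨_, k, rfl⟩, h⟩⟩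

namespace IsDivisible

variable {D : Submodule ℤ G}

theorem exists_zsmul_eq (hD : D.IsDivisible) {n : ℤ} (hn : n ≠ 0) {d : G} (hd : d ∈ D) :
    ∃ x ∈ D, n • x = d := by
  obtain ⟨x, hx, hnx⟩ := hD n.natAbs (Int.natAbs_pos.mpr hn) d hd
  rcases Int.natAbs_eq n with h | h
  · exact ⟨x, hx, h ▸ hnx⟩
  · exact ⟨-x, neg_mem hx, by rw [h, smul_neg, neg_smul, neg_neg, hnx]⟩

theorem map (hD : D.IsDivisible) (f : G →ₗ[ℤ] G') : (D.map f).IsDivisible := by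
  rintro n hn _ ⟨d, hd, rfl⟩
  obtain ⟨x, hx, rfl⟩ := hD n hn d hd
  exact ⟨f x, mem_map_of_mem hx, (map_zsmul f _ x).symm⟩

theorem exists_projection (hD : D.IsDivisible) :
    ∃ e : G →ₗ[ℤ] G, (∀ x, e x ∈ D) ∧ ∀ x ∈ D, e x = x := by
  let _ := divisibleByOfSMulRightSurj D ℤ fun hn ⟨d, hd⟩ => by
    obtain ⟨x, hx, hnx⟩ := hD.exists_zsmul_eq hn hd
    exact ⟨⟨x, hx⟩, Subtype.ext hnx⟩
  obtain ⟨r, hr⟩ := (Module.Baer.of_divisible D).extension_property D.subtype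
    D.injective_subtype LinearMap.id
  exact ⟨D.subtype ∘ₗ r, fun x => (r x).2, fun x hx => congrArg Subtype.val
    (LinearMap.congr_fun hr ⟨x, hx⟩)⟩

theorem top_quotient_of_sup_eq_top (hD : D.IsDivisible) {L : Submodule ℤ G} (hL : D ⊔ L = ⊤) :
    (⊤ : Submodule ℤ (G ⧸ L)).IsDivisible := by
  rw [← (map_mkQ_eq_top L D).mpr (sup_comm D L ▸ hL)]
  exact hD.map _

theorem isSmall_of_le_of_zsmul_eq_zero (hD : D.IsDivisible) {N : Submodule ℤ G} (hN : N ≤ D)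
    {n : ℤ} (hn : n ≠ 0) (hNn : ∀ x ∈ N, n • x = 0) : IsSmall N := by
  intro L hL
  have hDL : D ⊔ L = ⊤ := eq_top_iff.mpr (hL ▸ sup_le_sup_right hN L)
  refine eq_top_iff.mpr fun g _ => (Quotient.mk_eq_zero L).mp ?_
  obtain ⟨s, -, hs⟩ :=
    (hD.top_quotient_of_sup_eq_top hDL).exists_zsmul_eq hn (mem_top (x := L.mkQ g))
  have hNL : N.map L.mkQ = ⊤ := (map_mkQ_eq_top L N).mpr (sup_comm N L ▸ hL)
  obtain ⟨x, hx, rfl⟩ : s ∈ N.map L.mkQ := hNL ▸ mem_top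
  rw [← mkQ_apply, ← hs, ← map_zsmul, hNn x hx, map_zero]

theorem eq_zero_of_span_singleton {c : G} (h : (span ℤ {c}).IsDivisible) :
    c = 0 := by
  have hdiv : ∀ n : ℤ, n ≠ 0 → ∃ a : ℤ, (n * a - 1) • c = 0 := by
    intro n hn
    obtain ⟨x, hx, hnx⟩ := h.exists_zsmul_eq hn (mem_span_singleton_self c)
    obtain ⟨a, rfl⟩ := mem_span_singleton.mp hx
    exact ⟨a, by rw [sub_smul, one_smul, mul_smul, hnx, sub_self]⟩
  obtain ⟨a, ha⟩ := hdiv 2 two_ne_zero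
  obtain ⟨b, hb⟩ := hdiv (2 * a - 1) (by omega)
  calc c = b • ((2 * a - 1) • c) - ((2 * a - 1) * b - 1) • c := by module
    _ = 0 := by rw [ha, hb, smul_zero, sub_zero]

theorem isSmall_span_singleton (hD : D.IsDivisible) {d : G} (hd : d ∈ D) :
    IsSmall (span ℤ {d}) := by
  intro L hL
  have hDL : D ⊔ L = ⊤ :=
    eq_top_iff.mpr (hL ▸ sup_le_sup_right ((span_singleton_le_iff_mem d D).mpr hd) L)
  have hspan : span ℤ {L.mkQ d} = ⊤ := by
    rw [← Set.image_singleton, ← map_span, (map_mkQ_eq_top L _).mpr (sup_comm _ L ▸ hL)]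
  have hdL : d ∈ L := (Quotient.mk_eq_zero L).mp
    (eq_zero_of_span_singleton (hspan ▸ hD.top_quotient_of_sup_eq_top hDL))
  rwa [sup_eq_right.mpr ((span_singleton_le_iff_mem d L).mpr hdL)] at hL

theorem inf_torsion'_powers (hD : D.IsDivisible) {p : ℕ} (hp : p.Prime) :
    (D ⊓ torsion' ℤ G (Submonoid.powers (p : ℤ))).IsDivisible := by
  rintro n hn t ⟨htD, htp⟩
  obtain ⟨k, hkt⟩ := mem_torsion'_powers_iff.mp htp
  obtain ⟨c, b, hpb, rfl⟩ := Nat.exists_eq_pow_mul_and_not_dvd hn.ne' p hp.ne_one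
  -- divide `t` by `b` inside the `p`-primary part using Bézout, then by `p ^ c` inside `D`
  obtain ⟨u, v, huv⟩ : IsCoprime ((p : ℤ) ^ k) b := by
    exact_mod_cast Nat.isCoprime_iff_coprime.mpr
      (((Nat.Prime.coprime_iff_not_dvd hp).mpr hpb).pow_left k)
  obtain ⟨s, hsD, hs⟩ := hD (p ^ c) (pow_pos hp.pos c) (v • t) (D.smul_mem v htD)
  push_cast at hs ⊢
  refine ⟨s, ⟨hsD, mem_torsion'_powers_iff.mpr ⟨c + k, ?_⟩⟩, ?_⟩
  · rw [pow_add, mul_comm, mul_smul, hs, smul_comm, hkt, smul_zero]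
  · linear_combination (norm := module) (b : ℤ) • hs + huv • t - u • hkt

theorem exists_surjective_ker_eq_inf_torsionBy (hD : D.IsDivisible) {n : ℤ} (hn : n ≠ 0) :
    ∃ φ : G →ₗ[ℤ] G, Function.Surjective φ ∧ ker φ = D ⊓ torsionBy ℤ G n := by
  obtain ⟨e, heD, he⟩ := hD.exists_projection
  have hφ : ∀ g, (LinearMap.id + (n - 1) • e : G →ₗ[ℤ] G) g = g + (n - 1) • e g :=
    fun _ => rfl
  refine ⟨LinearMap.id + (n - 1) • e, fun g => ?_, le_antisymm (fun g hg => ?_) ?_⟩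
  · obtain ⟨y, hyD, hy⟩ := hD.exists_zsmul_eq hn (heD g)
    refine ⟨g - e g + y, ?_⟩
    rw [hφ, map_add, map_sub, he _ (heD g), he y hyD, sub_self, zero_add]
    linear_combination (norm := module) hy
  · rw [mem_ker, hφ] at hg
    have hgD : g ∈ D := eq_neg_of_add_eq_zero_left hg ▸ neg_mem (D.smul_mem _ (heD g))
    rw [he g hgD] at hg
    exact ⟨hgD, (mem_torsionBy_iff _ _).mpr (by linear_combination (norm := module) hg)⟩
  · rintro g ⟨hgD, hgn⟩
    rw [mem_ker, hφ, he g hgD]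
    linear_combination (norm := module) (mem_torsionBy_iff _ _).mp hgn

theorem inf_torsionBy_eq_bot (hD : D.IsDivisible) (h : IsDualAutoInv ℤ G) {n : ℤ}
    (hn : n ≠ 0) : D ⊓ torsionBy ℤ G n = ⊥ := by
  obtain ⟨φ, hφ, hker⟩ := hD.exists_surjective_ker_eq_inf_torsionBy hn
  exact h.eq_bot_of_linearEquiv_quotient
    (hD.isSmall_of_le_of_zsmul_eq_zero inf_le_left hn fun x hx => hx.2)
    ((φ.quotKerEquivOfSurjective hφ).symm.trans (quotEquivOfEq _ _ hker))

theorem exists_lift_neg_on_two_primary (hD : D.IsDivisible) (h : IsDualAutoInv ℤ G) {d : G}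
    (hd : d ∈ D) : ∃ φ : G →ₗ[ℤ] G,
      (∀ y ∈ D, ∀ k : ℕ, (2 : ℤ) ^ k • y = d → φ y + y ∈ span ℤ {d}) ∧
      (∀ z ∈ D, (3 : ℤ) • z = d → φ z - z ∈ span ℤ {d}) := by
  set K := span ℤ {d}
  have hK : IsSmall K := hD.isSmall_span_singleton hd
  have hdK : K.mkQ d = 0 := (Quotient.mk_eq_zero K).mpr (mem_span_singleton_self d)
  have hA := (hD.map K.mkQ).inf_torsion'_powers Nat.prime_two
  rw [Nat.cast_ofNat] at hA
  obtain ⟨ε, hεA, hε⟩ := hA.exists_projection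
  set η : (G ⧸ K) →ₗ[ℤ] G ⧸ K := LinearMap.id - (2 : ℤ) • ε
  have hη : ∀ t, η t = t - (2 : ℤ) • ε t := fun _ => rfl
  have hηη : Function.LeftInverse η η := fun t => by
    rw [hη, hη, map_sub, map_smul, hε _ (hεA t)]
    module
  obtain ⟨φ, hφ⟩ := h K K hK hK η hηη.surjective
    (by rw [ker_eq_bot.mpr hηη.injective]; exact isSmall_bot)
  have hφη : ∀ x, K.mkQ (φ x) = η (K.mkQ x) := LinearMap.congr_fun hφ
  refine ⟨φ, fun y hy k hyd => (Quotient.mk_eq_zero K).mp ?_,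
    fun z hz hzd => (Quotient.mk_eq_zero K).mp ?_⟩
  · have hyA : ε (K.mkQ y) = K.mkQ y := hε _
      ⟨mem_map_of_mem hy, mem_torsion'_powers_iff.mpr ⟨k, by rw [← map_zsmul, hyd, hdK]⟩⟩
    change K.mkQ (φ y + y) = 0
    rw [map_add, hφη, hη, hyA]
    module
  · obtain ⟨k, hk⟩ := mem_torsion'_powers_iff.mp (hεA (K.mkQ z)).2
    have hz0 : ε (K.mkQ z) = 0 := eq_zero_of_isCoprime_of_smul_eq_zero
      (IsCoprime.pow_right (⟨1, -1, by norm_num⟩ : IsCoprime (3 : ℤ) 2))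
      (by rw [← map_zsmul, ← map_zsmul, hzd, hdK, map_zero]) hk
    change K.mkQ (φ z - z) = 0
    rw [map_sub, hφη, hη, hz0, smul_zero, sub_zero, sub_self]

theorem exists_zsmul_eq_zero_of_mem (hD : D.IsDivisible) (h : IsDualAutoInv ℤ G) {d : G}
    (hd : d ∈ D) : ∃ n : ℤ, n ≠ 0 ∧ n • d = 0 := by
  by_contra! hfree
  obtain ⟨φ, hneg, hpos⟩ := hD.exists_lift_neg_on_two_primary h hd
  obtain ⟨z, hz, hzd⟩ := hD.exists_zsmul_eq three_ne_zero hd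
  obtain ⟨m, hm⟩ := mem_span_singleton.mp (hpos z hz hzd)
  -- `φ d = 3 • φ z` is `d` modulo `3 d`, while `φ d = 2 ^ k • φ y` is `-d` modulo `2 ^ k d`
  have hdvd : ∀ k : ℕ, (2 : ℤ) ^ k ∣ 2 + 3 * m := by
    intro k
    obtain ⟨y, hy, hyd⟩ := hD.exists_zsmul_eq (pow_ne_zero k two_ne_zero) hd
    obtain ⟨m', hm'⟩ := mem_span_singleton.mp (hneg y hy k hyd)
    refine ⟨m', of_not_not fun hne => hfree _ (sub_ne_zero.mpr (Ne.symm hne)) ?_⟩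
    have h2 : φ d = (2 : ℤ) ^ k • φ y := by rw [← hyd, map_zsmul]
    have h3 : φ d = (3 : ℤ) • φ z := by rw [← hzd, map_zsmul]
    linear_combination (norm := module) (2 : ℤ) ^ k • hm' - (3 : ℤ) • hm + hyd + hzd + h3 - h2
  have hm0 : 2 + 3 * m = 0 := Int.eq_zero_of_dvd_of_natAbs_lt_natAbs (hdvd _)
    (by rw [Int.natAbs_pow]; exact Nat.lt_two_pow_self)
  omega

end IsDivisible

end Submodule

/-- Every dual automorphism-invariant abelian group is reduced: it has no nonzero
divisible subgroup. -/
theorem dualAutoInv_abelian_reduced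
    (G : Type*) [AddCommGroup G] (h : IsDualAutoInv ℤ G) :
    ∀ D : Submodule ℤ G,
      (∀ n : ℕ, 0 < n → ∀ d ∈ D, ∃ x ∈ D, (n : ℤ) • x = d) → D = ⊥ := by
  intro D hD
  refine eq_bot_iff.mpr fun d hd => ?_
  obtain ⟨n, hn, hnd⟩ := IsDivisible.exists_zsmul_eq_zero_of_mem hD h hd
  exact IsDivisible.inf_torsionBy_eq_bot hD h hn ▸ ⟨hd, hnd⟩
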